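/- arXiv:2405.19368 — 2 statements merged into one kernel-verified Lean document; each statement's English description precedes it below -/
import Mathlib

section
/- If 0 < x ≤ 1 and 0 < y ≤ 1, then Γ(x,y) ≤ min(Γ(x)/y^x, Γ(y)/x^y). -/
open Real Set intervalIntegral
open MeasureTheory

noncomputable def biGamma (x y : ℝ) : ℝ :=
  ∫ t in (0:ℝ)..1, (-Real.log t) ^ (x - 1) * (-Real.log (1 - t)) ^ (y - 1)

/-!
Since `t ≤ -log (1 - t)` on `(0, 1)` and `y - 1 ≤ 0`, the integrand of `Γ(x,y)` is bounded by
`(-log t) ^ (x - 1) * t ^ (y - 1)`, whose integral over `(0, 1)` is `Γ(x) / y ^ x` by the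
substitution `t = exp (-u)`. The other bound follows from the symmetry `t ↦ 1 - t`.
-/

lemma image_exp_neg_Ioi_zero : (fun u : ℝ => exp (-u)) '' Ioi 0 = Ioo 0 1 := by
  ext t
  constructor
  · rintro ⟨u, hu, rfl⟩
    exact ⟨exp_pos _, exp_lt_one_iff.2 (neg_lt_zero.2 hu)⟩
  · rintro ⟨h0, h1⟩
    exact ⟨-log t, neg_pos.2 (log_neg h0 h1), by simp [exp_log h0]⟩

lemma injOn_exp_neg : InjOn (fun u : ℝ => exp (-u)) (Ioi 0) :=
  (exp_injective.comp neg_injective).injOn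

lemma hasDerivWithinAt_exp_neg (u : ℝ) :
    HasDerivWithinAt (fun u : ℝ => exp (-u)) (-exp (-u)) (Ioi 0) u := by
  simpa using (hasDerivAt_neg u).exp.hasDerivWithinAt

section ExpNegSubstitution

variable {E : Type*} [NormedAddCommGroup E] [NormedSpace ℝ E]

lemma integrableOn_Ioo_zero_one_iff_exp_neg (f : ℝ → E) :
    IntegrableOn f (Ioo 0 1) ↔ IntegrableOn (fun u => exp (-u) • f (exp (-u))) (Ioi 0) := by
  rw [← image_exp_neg_Ioi_zero, integrableOn_image_iff_integrableOn_abs_deriv_smul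
    measurableSet_Ioi (fun u _ => hasDerivWithinAt_exp_neg u) injOn_exp_neg]
  simp only [abs_neg, abs_of_pos (exp_pos _)]

lemma integral_Ioo_zero_one_eq_exp_neg (f : ℝ → E) :
    ∫ t in Ioo 0 1, f t = ∫ u in Ioi 0, exp (-u) • f (exp (-u)) := by
  rw [← image_exp_neg_Ioi_zero, integral_image_eq_integral_abs_deriv_smul
    measurableSet_Ioi (fun u _ => hasDerivWithinAt_exp_neg u) injOn_exp_neg]
  simp only [abs_neg, abs_of_pos (exp_pos _)]

end ExpNegSubstitution

lemma exp_neg_smul_neg_log_rpow_mul_rpow (x y u : ℝ) :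
    exp (-u) • ((-log (exp (-u))) ^ (x - 1) * exp (-u) ^ (y - 1))
      = u ^ (x - 1) * exp (-y * u) := by
  rw [log_exp, neg_neg, smul_eq_mul, ← exp_mul, mul_left_comm, ← exp_add]
  ring_nf

lemma integrableOn_neg_log_rpow_mul_rpow {x y : ℝ} (hx : 0 < x) (hy : 0 < y) :
    IntegrableOn (fun t : ℝ => (-log t) ^ (x - 1) * t ^ (y - 1)) (Ioo 0 1) := by
  rw [integrableOn_Ioo_zero_one_iff_exp_neg]
  simp only [exp_neg_smul_neg_log_rpow_mul_rpow]
  simpa using integrableOn_rpow_mul_exp_neg_mul_rpow (s := x - 1) (p := 1) (by linarith)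
    zero_lt_one hy

lemma integral_neg_log_rpow_mul_rpow {x y : ℝ} (hx : 0 < x) (hy : 0 < y) :
    ∫ t in Ioo 0 1, (-log t) ^ (x - 1) * t ^ (y - 1) = Gamma x / y ^ x := by
  rw [integral_Ioo_zero_one_eq_exp_neg]
  simp only [exp_neg_smul_neg_log_rpow_mul_rpow, neg_mul]
  rw [integral_rpow_mul_exp_neg_mul_Ioi hx hy, div_rpow zero_le_one hy.le, one_rpow]
  ring

lemma le_neg_log_one_sub {t : ℝ} (ht : t < 1) : t ≤ -log (1 - t) := by
  linarith [log_le_sub_one_of_pos (sub_pos.2 ht)]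

lemma neg_log_nonneg_of_mem_Ioo {t : ℝ} (ht : t ∈ Ioo (0 : ℝ) 1) : 0 ≤ -log t :=
  neg_nonneg.2 (log_nonpos ht.1.le ht.2.le)

lemma biGamma_comm (x y : ℝ) : biGamma x y = biGamma y x := by
  have h := integral_comp_sub_left
    (fun t => (-log t) ^ (y - 1) * (-log (1 - t)) ^ (x - 1)) (a := 0) (b := 1) 1
  simp only [sub_zero, sub_self, sub_sub_cancel] at h
  rw [biGamma, biGamma, ← h]
  simp only [mul_comm]

lemma biGamma_le_Gamma_div_rpow {x y : ℝ} (hx : 0 < x) (hy0 : 0 < y) (hy1 : y ≤ 1) :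
    biGamma x y ≤ Gamma x / y ^ x := by
  rw [biGamma, integral_of_le zero_le_one, integral_Ioc_eq_integral_Ioo,
    ← integral_neg_log_rpow_mul_rpow hx hy0]
  refine integral_mono_of_nonneg ?_ (integrableOn_neg_log_rpow_mul_rpow hx hy0) ?_
  all_goals filter_upwards [ae_restrict_mem measurableSet_Ioo] with t ht
  · have ht' : 1 - t ∈ Ioo (0 : ℝ) 1 := ⟨sub_pos.2 ht.2, sub_lt_self 1 ht.1⟩
    exact mul_nonneg (rpow_nonneg (neg_log_nonneg_of_mem_Ioo ht) _)
      (rpow_nonneg (neg_log_nonneg_of_mem_Ioo ht') _)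
  · exact mul_le_mul_of_nonneg_left
      (rpow_le_rpow_of_nonpos ht.1 (le_neg_log_one_sub ht.2) (by linarith))
      (rpow_nonneg (neg_log_nonneg_of_mem_Ioo ht) _)

theorem biGamma_le_min (x y : ℝ) (hx0 : 0 < x) (hx1 : x ≤ 1) (hy0 : 0 < y) (hy1 : y ≤ 1) :
    biGamma x y ≤ min (Real.Gamma x / y ^ x) (Real.Gamma y / x ^ y) :=
  le_min (biGamma_le_Gamma_div_rpow hx0 hy0 hy1)
    (biGamma_comm x y ▸ biGamma_le_Gamma_div_rpow hy0 hx0 hx1)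
end

section
/- The Bigamma function is logarithmically convex on (0,∞)×(0,∞): for p,q ≥ 0 with p+q=1 and x,y,a,b > 0, Γ(px+qa, py+qb) ≤ Γ(x,y)^p Γ(a,b)^q. -/
open Real Set intervalIntegral

open MeasureTheory

/-!
On `(0, 1)` the integrand is `A ^ (x - 1) * B ^ (y - 1)` with `A = -log t` and `B = -log (1 - t)`
both positive, so at convex combinations of the parameters it is pointwise the weighted geometric
mean of the two integrands, and Hölder's inequality with exponents `1 / p`, `1 / q` integrates this.
The integrals are finite for positive parameters: near `0`, `B` is comparable to `t` and every
power of `A` is `O(t ^ (-ε))`; near `1` the roles of the parameters are swapped by `t ↦ 1 - t`.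
-/

theorem integral_rpow_mul_rpow_le_of_nonneg {α : Type*} [MeasurableSpace α] {μ : Measure α}
    {f g : α → ℝ} (hf_nn : 0 ≤ᵐ[μ] f) (hg_nn : 0 ≤ᵐ[μ] g) (hf : Integrable f μ)
    (hg : Integrable g μ) {p q : ℝ} (hp : 0 ≤ p) (hq : 0 ≤ q) (hpq : p + q = 1) :
    ∫ a, f a ^ p * g a ^ q ∂μ ≤ (∫ a, f a ∂μ) ^ p * (∫ a, g a ∂μ) ^ q := by
  have hofReal : ∀ᵐ a ∂μ, ENNReal.ofReal (f a ^ p * g a ^ q)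
      = ENNReal.ofReal (f a) ^ p * ENNReal.ofReal (g a) ^ q := by
    filter_upwards [hf_nn, hg_nn] with a (hfa : 0 ≤ f a) (hga : 0 ≤ g a)
    rw [ENNReal.ofReal_mul (by positivity), ENNReal.ofReal_rpow_of_nonneg hfa hp,
      ENNReal.ofReal_rpow_of_nonneg hga hq]
  have hfg_nn : 0 ≤ᵐ[μ] fun a ↦ f a ^ p * g a ^ q := by
    filter_upwards [hf_nn, hg_nn] with a (hfa : 0 ≤ f a) (hga : 0 ≤ g a)
    positivity
  have hfg_meas : AEStronglyMeasurable (fun a ↦ f a ^ p * g a ^ q) μ :=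
    ((hf.aemeasurable.pow_const p).mul (hg.aemeasurable.pow_const q)).aestronglyMeasurable
  have hf_lint := ofReal_integral_eq_lintegral_ofReal hf hf_nn
  have hg_lint := ofReal_integral_eq_lintegral_ofReal hg hg_nn
  calc ∫ a, f a ^ p * g a ^ q ∂μ
      = (∫⁻ a, ENNReal.ofReal (f a) ^ p * ENNReal.ofReal (g a) ^ q ∂μ).toReal := by
        rw [integral_eq_lintegral_of_nonneg_ae hfg_nn hfg_meas, lintegral_congr_ae hofReal]
    _ ≤ ((∫⁻ a, ENNReal.ofReal (f a) ∂μ) ^ p * (∫⁻ a, ENNReal.ofReal (g a) ∂μ) ^ q).toReal := by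
        refine ENNReal.toReal_mono ?_ (ENNReal.lintegral_mul_norm_pow_le
          hf.aemeasurable.ennreal_ofReal hg.aemeasurable.ennreal_ofReal hp hq hpq)
        rw [← hf_lint, ← hg_lint]
        exact ENNReal.mul_ne_top (by simp [hp]) (by simp [hq])
    _ = (∫ a, f a ∂μ) ^ p * (∫ a, g a ∂μ) ^ q := by
        rw [← hf_lint, ← hg_lint, ENNReal.toReal_mul, ← ENNReal.toReal_rpow,
          ← ENNReal.toReal_rpow, ENNReal.toReal_ofReal (integral_nonneg_of_ae hf_nn),
          ENNReal.toReal_ofReal (integral_nonneg_of_ae hg_nn)]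

theorem rpow_le_max_mul_rpow {u v : ℝ} (s : ℝ) (hu : 0 < u) (huv : u ≤ v) (hv : v ≤ 2 * u) :
    v ^ s ≤ max 1 (2 ^ s) * u ^ s := by
  rcases le_or_gt 0 s with hs | hs
  · calc v ^ s ≤ (2 * u) ^ s := rpow_le_rpow (hu.le.trans huv) hv hs
      _ = 2 ^ s * u ^ s := mul_rpow zero_le_two hu.le
      _ ≤ max 1 (2 ^ s) * u ^ s := by gcongr; exact le_max_right _ _
  · calc v ^ s ≤ u ^ s := rpow_le_rpow_of_nonpos hu huv hs.le
      _ ≤ max 1 (2 ^ s) * u ^ s := le_mul_of_one_le_left (by positivity) (le_max_left _ _)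

theorem neg_log_one_sub_mem_Icc {t : ℝ} (ht₀ : 0 ≤ t) (ht : t ≤ 1 / 2) :
    -log (1 - t) ∈ Icc t (2 * t) := by
  have h₀ : 0 < 1 - t := by linarith
  refine ⟨by linarith [log_le_sub_one_of_pos h₀], ?_⟩
  have hlog := one_sub_inv_le_log_of_pos h₀
  have hinv : (1 - t)⁻¹ - 1 ≤ 2 * t := by
    rw [sub_le_iff_le_add, inv_le_iff_one_le_mul₀ h₀]
    nlinarith
  linarith

theorem neg_log_rpow_le_mul_rpow_neg (s : ℝ) {ε : ℝ} (hε : 0 < ε) :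
    ∃ C, ∀ t ∈ Ioc (0 : ℝ) (1 / 2), (-log t) ^ s ≤ C * t ^ (-ε) := by
  rcases le_or_gt s 0 with hs | hs
  · refine ⟨log 2 ^ s, fun t ⟨ht₀, ht⟩ ↦ ?_⟩
    have hlog : log 2 ≤ -log t := by
      rw [← log_inv]; exact log_le_log two_pos (by rw [le_inv_comm₀ two_pos ht₀]; linarith)
    calc (-log t) ^ s ≤ log 2 ^ s := rpow_le_rpow_of_nonpos (log_pos one_lt_two) hlog hs
      _ ≤ log 2 ^ s * t ^ (-ε) := le_mul_of_one_le_right (by positivity)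
          (one_le_rpow_of_pos_of_le_one_of_nonpos ht₀ (by linarith) (by linarith))
  · refine ⟨(s / ε) ^ s, fun t ⟨ht₀, ht⟩ ↦ ?_⟩
    have hlog : -log t ≤ t⁻¹ ^ (ε / s) / (ε / s) := by
      rw [← log_inv]; exact log_le_rpow_div (by positivity) (by positivity)
    calc (-log t) ^ s ≤ (t⁻¹ ^ (ε / s) / (ε / s)) ^ s := by
          gcongr
          exact neg_nonneg.2 (log_nonpos ht₀.le (by linarith))
      _ = (s / ε) ^ s * t ^ (-ε) := by
          rw [div_rpow (by positivity) (by positivity), ← rpow_mul (by positivity),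
            div_mul_cancel₀ _ hs.ne', inv_rpow ht₀.le, rpow_neg ht₀.le,
            div_eq_mul_inv, ← inv_rpow (div_pos hε hs).le s, inv_div, mul_comm]

noncomputable def biGammaIntegrand (x y t : ℝ) : ℝ :=
  (-log t) ^ (x - 1) * (-log (1 - t)) ^ (y - 1)

theorem biGamma_eq_integral_Ioo (x y : ℝ) :
    biGamma x y = ∫ t in Ioo 0 1, biGammaIntegrand x y t := by
  rw [biGamma, integral_of_le zero_le_one, integral_Ioc_eq_integral_Ioo]
  rfl

theorem measurable_biGammaIntegrand (x y : ℝ) : Measurable (biGammaIntegrand x y) := by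
  unfold biGammaIntegrand
  fun_prop

theorem biGammaIntegrand_nonneg (x y : ℝ) {t : ℝ} (ht₀ : 0 ≤ t) (ht₁ : t ≤ 1) :
    0 ≤ biGammaIntegrand x y t := by
  have hA : 0 ≤ -log t := neg_nonneg.2 (log_nonpos ht₀ ht₁)
  have hB : 0 ≤ -log (1 - t) := neg_nonneg.2 (log_nonpos (by linarith) (by linarith))
  unfold biGammaIntegrand
  positivity

theorem biGammaIntegrand_one_sub (x y t : ℝ) :
    biGammaIntegrand x y (1 - t) = biGammaIntegrand y x t := by
  rw [biGammaIntegrand, biGammaIntegrand, sub_sub_cancel, mul_comm]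

theorem biGammaIntegrand_mul_add_mul {p q : ℝ} (hpq : p + q = 1) (x y a b : ℝ) {t : ℝ}
    (ht : t ∈ Ioo 0 1) :
    biGammaIntegrand (p * x + q * a) (p * y + q * b) t
      = biGammaIntegrand x y t ^ p * biGammaIntegrand a b t ^ q := by
  have rpow_mul_add_mul_sub_one : ∀ {A : ℝ}, 0 < A → ∀ u v : ℝ,
      A ^ (p * u + q * v - 1) = (A ^ (u - 1)) ^ p * (A ^ (v - 1)) ^ q := fun hA u v ↦ by
    rw [← rpow_mul hA.le, ← rpow_mul hA.le, ← rpow_add hA]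
    congr 1
    linear_combination hpq
  have hA : 0 < -log t := neg_pos.2 (log_neg ht.1 ht.2)
  have hB : 0 < -log (1 - t) := neg_pos.2 (log_neg (by linarith [ht.2]) (by linarith [ht.1]))
  rw [biGammaIntegrand, biGammaIntegrand, biGammaIntegrand, rpow_mul_add_mul_sub_one hA, rpow_mul_add_mul_sub_one hB,
    mul_rpow (by positivity) (by positivity), mul_rpow (by positivity) (by positivity)]
  ring

theorem intervalIntegrable_biGammaIntegrand_zero_half (x : ℝ) {y : ℝ} (hy : 0 < y) :
    IntervalIntegrable (biGammaIntegrand x y) volume 0 (1 / 2) := by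
  obtain ⟨C, hC⟩ := neg_log_rpow_le_mul_rpow_neg (x - 1) (half_pos hy)
  set D : ℝ := max 1 (2 ^ (y - 1))
  have hbound : IntervalIntegrable (fun t ↦ C * D * t ^ (y / 2 - 1)) volume 0 (1 / 2) :=
    (intervalIntegral.intervalIntegrable_rpow' (by linarith)).const_mul _
  refine hbound.mono_fun' (measurable_biGammaIntegrand x y).aestronglyMeasurable ?_
  rw [uIoc_of_le (by norm_num)]
  filter_upwards [ae_restrict_mem measurableSet_Ioc] with t ht
  obtain ⟨hBt, hB2t⟩ := neg_log_one_sub_mem_Icc ht.1.le ht.2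
  have hA := hC t ht
  have hB := rpow_le_max_mul_rpow (y - 1) ht.1 hBt hB2t
  rw [norm_of_nonneg (biGammaIntegrand_nonneg x y ht.1.le (by linarith [ht.2]))]
  calc biGammaIntegrand x y t ≤ C * t ^ (-(y / 2)) * (D * t ^ (y - 1)) := by
        have hA₀ : 0 ≤ -log t := neg_nonneg.2 (log_nonpos ht.1.le (by linarith [ht.2]))
        exact mul_le_mul hA hB (rpow_nonneg (ht.1.le.trans hBt) _) ((rpow_nonneg hA₀ _).trans hA)
    _ = C * D * t ^ (y / 2 - 1) := by
        rw [mul_mul_mul_comm, ← rpow_add ht.1]; ring_nf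

theorem integrableOn_biGammaIntegrand {x y : ℝ} (hx : 0 < x) (hy : 0 < y) :
    IntegrableOn (biGammaIntegrand x y) (Ioo 0 1) := by
  rw [← intervalIntegrable_iff_integrableOn_Ioo_of_le zero_le_one]
  have hright := (intervalIntegrable_biGammaIntegrand_zero_half y hx).comp_sub_left 1
  simp_rw [biGammaIntegrand_one_sub] at hright
  rw [sub_zero, show (1 : ℝ) - 1 / 2 = 1 / 2 by norm_num] at hright
  exact (intervalIntegrable_biGammaIntegrand_zero_half x hy).trans hright.symm

theorem biGamma_log_convex (p q x y a b : ℝ) (hp : 0 ≤ p) (hq : 0 ≤ q)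
    (hpq : p + q = 1) (hx : 0 < x) (hy : 0 < y) (ha : 0 < a) (hb : 0 < b) :
    biGamma (p * x + q * a) (p * y + q * b)
      ≤ biGamma x y ^ p * biGamma a b ^ q := by
  have nonneg_ae : ∀ u v : ℝ, 0 ≤ᵐ[volume.restrict (Ioo 0 1)] biGammaIntegrand u v :=
    fun u v ↦ (ae_restrict_mem measurableSet_Ioo).mono fun t ht ↦
      biGammaIntegrand_nonneg u v ht.1.le ht.2.le
  simp only [biGamma_eq_integral_Ioo]
  rw [setIntegral_congr_fun measurableSet_Ioo
    fun t ht ↦ biGammaIntegrand_mul_add_mul hpq x y a b ht]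
  exact integral_rpow_mul_rpow_le_of_nonneg (nonneg_ae x y) (nonneg_ae a b)
    (integrableOn_biGammaIntegrand hx hy) (integrableOn_biGammaIntegrand ha hb) hp hq hpq
end
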